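/- arXiv:2004.11515 — 3 statements merged into one kernel-verified Lean document; each statement's English description precedes it below -/
import Mathlib

section
/- Let φ satisfy (A1). Then Φ is sequentially weak-* lower semicontinuous on M(Ω): if a sequence μ^(k) ∈ M(Ω) converges weak-* to μ ∈ M(Ω) (i.e. ∫ g dμ^(k) → ∫ g dμ for every g ∈ C(Ω)), then liminf_{k→∞} Φ(μ^(k)) ≥ Φ(μ). -/
/-- Assumption (A1) from the paper for a penalty `φ : [0,∞) → [0,∞)` with derivative `φD`
and `γ`-convexity constant `γ ≥ 0`: `φ` is concave, nondecreasing, `φ 0 = 0`, has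
(one-sided) derivative `φD z` at every `z ≥ 0` with `φD 0 = 1`, `φ z → ∞` as `z → ∞`, and
`0 ≤ φD z₁ - φD z₂ ≤ γ (z₂ - z₁)` for all `0 ≤ z₁ ≤ z₂`. -/
structure A1 (φ φD : ℝ → ℝ) (γ : ℝ) : Prop where
  nonneg : ∀ z, 0 ≤ z → 0 ≤ φ z
  concave : ConcaveOn ℝ (Set.Ici (0 : ℝ)) φ
  mono : MonotoneOn φ (Set.Ici (0 : ℝ))
  map_zero : φ 0 = 0
  hasDeriv : ∀ z, 0 ≤ z → HasDerivWithinAt φ (φD z) (Set.Ici (0 : ℝ)) z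
  deriv_zero : φD 0 = 1
  tendsto_top : Filter.Tendsto φ Filter.atTop Filter.atTop
  gamma_nonneg : 0 ≤ γ
  semiconvex : ∀ z₁ z₂, 0 ≤ z₁ → z₁ ≤ z₂ →
    0 ≤ φD z₁ - φD z₂ ∧ φD z₁ - φD z₂ ≤ γ * (z₂ - z₁)

/-- Assumption (A2) from the paper: there are `γ̂ > 0` and `ẑ > 0` such that
`γ̂ (z₂ - z₁) ≤ φD z₁ - φD z₂` for all `0 ≤ z₁ ≤ z₂ ≤ ẑ`. -/
def A2 (φD : ℝ → ℝ) (γh zh : ℝ) : Prop :=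
  0 < γh ∧ 0 < zh ∧
    ∀ z₁ z₂, 0 ≤ z₁ → z₁ ≤ z₂ → z₂ ≤ zh → γh * (z₂ - z₁) ≤ φD z₁ - φD z₂

open MeasureTheory

/-- Integral of a real function against a finite signed measure, via the Jordan
decomposition. -/
noncomputable def sInt {α : Type*} [MeasurableSpace α]
    (μ : SignedMeasure α) (g : α → ℝ) : ℝ :=
  (∫ x, g x ∂μ.toJordanDecomposition.posPart) -
    ∫ x, g x ∂μ.toJordanDecomposition.negPart

/-- The total variation norm `‖μ‖_{M(Ω)} = |μ|(Ω)` of a finite signed measure. -/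
noncomputable def tvNorm {α : Type*} [MeasurableSpace α] (μ : SignedMeasure α) : ℝ :=
  (μ.totalVariation Set.univ).toReal

/-- The set of atoms of (the total variation of) a signed measure. -/
def atomsOf {α : Type*} [MeasurableSpace α] (μ : SignedMeasure α) : Set α :=
  {ω | μ.totalVariation {ω} ≠ 0}

/-- The nonconvex penalty functional
`Φ(μ) = |μ|(Ω \ atom(μ)) + Σ_{ω ∈ atom(μ)} φ(|μ|({ω}))`. -/
noncomputable def PhiPen {α : Type*} [MeasurableSpace α]
    (φ : ℝ → ℝ) (μ : SignedMeasure α) : ℝ :=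
  (μ.totalVariation (atomsOf μ)ᶜ).toReal +
    ∑' ω : atomsOf μ, φ (μ.totalVariation {(ω : α)}).toReal

/-!
Since `φ` is concave with `φ 0 = 0` and `φ' 0 = 1`, it is subadditive, `1`-Lipschitz and
`φ ≤ id`. Hence `∑ᵢ φ(|ν|(Wᵢ)) ≤ Φ(ν)` for any finitely many disjoint Borel sets `Wᵢ`: split each
`Wᵢ` into its diffuse part, which `φ` can only shrink, and its atoms, where `φ` is countably
subadditive. Conversely `Φ(μ)` is almost attained by finitely many disjoint open sets:
neighbourhoods of the heaviest atoms of `μ`, together with neighbourhoods of closed pieces of small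
diffuse mass, on which `φ` is almost linear. For open `U`, `ν ↦ |ν|(U)` is weak-* lower
semicontinuous (test against a Urysohn function that is `1` and `-1` on closed pieces of the two
Hahn sets inside `U`), and `φ` is `1`-Lipschitz, so the finite sums pass to the liminf. The
Banach–Steinhaus theorem bounds `|μₖ|(Ω)`, hence `Φ(μₖ)`, which keeps the real `liminf` from
being a junk value.
-/

open MeasureTheory Filter Topology Set

namespace A1

variable {φ φD : ℝ → ℝ} {γ a b x y z : ℝ}

theorem hasDerivWithinAt_zero (h : A1 φ φD γ) : HasDerivWithinAt φ 1 (Ici 0) 0 :=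
  h.deriv_zero ▸ h.hasDeriv 0 le_rfl

theorem slope_zero_eq (h : A1 φ φD γ) (z : ℝ) : slope φ 0 z = φ z / z := by
  rw [slope_def_field, h.map_zero, sub_zero, sub_zero]

theorem tendsto_slope_zero (h : A1 φ φD γ) : Tendsto (slope φ 0) (𝓝[>] 0) (𝓝 1) :=
  (hasDerivWithinAt_iff_tendsto_slope' (lt_irrefl 0)).1 <|
    h.hasDerivWithinAt_zero.mono Ioi_subset_Ici_self

theorem slope_zero_anti (h : A1 φ φD γ) (hz : 0 < z) (hzy : z ≤ y) :
    slope φ 0 y ≤ slope φ 0 z := by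
  have := h.concave.neg.secant_mono (a := 0) self_mem_Ici hz.le (hz.trans_le hzy).le
    hz.ne' (hz.trans_le hzy).ne' hzy
  simp only [Pi.neg_apply, h.map_zero, neg_zero, sub_zero, neg_div] at this
  rw [h.slope_zero_eq, h.slope_zero_eq]
  linarith

theorem le_self (h : A1 φ φD γ) (hz : 0 ≤ z) : φ z ≤ z := by
  rcases hz.eq_or_lt with rfl | hz
  · exact h.map_zero.le
  have := h.concave.slope_le_of_hasDerivWithinAt self_mem_Ici hz.le hz h.hasDerivWithinAt_zero
  rwa [h.slope_zero_eq, div_le_one hz] at this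

theorem div_mul_le (h : A1 φ φD γ) (hz : 0 ≤ z) (hzy : z ≤ y) : z / y * φ y ≤ φ z := by
  rcases hz.eq_or_lt with rfl | hz
  · simp [h.map_zero]
  have := h.slope_zero_anti hz hzy
  rw [h.slope_zero_eq, h.slope_zero_eq, div_le_div_iff₀ (hz.trans_le hzy) hz] at this
  rw [div_mul_eq_mul_div, div_le_iff₀ (hz.trans_le hzy)]
  linarith

theorem map_add_le (h : A1 φ φD γ) (ha : 0 ≤ a) (hb : 0 ≤ b) : φ (a + b) ≤ φ a + φ b := by
  rcases (add_nonneg ha hb).eq_or_lt with hab | hab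
  · obtain ⟨rfl, rfl⟩ : a = 0 ∧ b = 0 := ⟨by linarith, by linarith⟩
    simp [h.map_zero]
  have key : (a / (a + b) + b / (a + b)) * φ (a + b) ≤ φ a + φ b := by
    rw [add_mul]
    exact add_le_add (h.div_mul_le ha (by linarith)) (h.div_mul_le hb (by linarith))
  rwa [← add_div, div_self hab.ne', one_mul] at key

theorem map_add_le_add (h : A1 φ φD γ) (ha : 0 ≤ a) (hb : 0 ≤ b) : φ (a + b) ≤ a + φ b := by
  linarith [h.map_add_le ha hb, h.le_self ha]

theorem map_le_add_sub (h : A1 φ φD γ) (ha : 0 ≤ a) (hab : a ≤ b) : φ b ≤ φ a + (b - a) := by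
  simpa [add_comm] using h.map_add_le_add (sub_nonneg.2 hab) ha

theorem sub_le_map_of_sub_le (h : A1 φ φD γ) {η : ℝ} (hη : 0 ≤ η) (hx : 0 ≤ x) (hy : 0 ≤ y)
    (hxy : x - η ≤ y) : φ x - η ≤ φ y := by
  rcases le_total x y with hle | hle
  · linarith [h.mono hx hy hle]
  · linarith [h.map_le_add_sub hy hle]

theorem exists_mul_le (h : A1 φ φD γ) {ε : ℝ} (hε : 0 < ε) :
    ∃ δ > 0, ∀ z ∈ Icc 0 δ, (1 - ε) * z ≤ φ z := by
  obtain ⟨δ, hδε, hδ⟩ := ((h.tendsto_slope_zero.eventually (lt_mem_nhds (sub_lt_self 1 hε))).and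
    self_mem_nhdsWithin).exists
  refine ⟨δ, hδ, fun z ⟨hz, hzδ⟩ => ?_⟩
  rcases hz.eq_or_lt with rfl | hz
  · simp [h.map_zero]
  have := hδε.trans_le (h.slope_zero_anti hz hzδ)
  rw [h.slope_zero_eq, lt_div_iff₀ hz] at this
  exact this.le

theorem summable_comp (h : A1 φ φD γ) {ι : Type*} {z : ι → ℝ} (hz : ∀ i, 0 ≤ z i)
    (hs : Summable z) : Summable fun i => φ (z i) :=
  hs.of_nonneg_of_le (fun i => h.nonneg _ (hz i)) (fun i => h.le_self (hz i))

theorem map_sum_le (h : A1 φ φD γ) {ι : Type*} (s : Finset ι) {z : ι → ℝ} (hz : ∀ i, 0 ≤ z i) :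
    φ (∑ i ∈ s, z i) ≤ ∑ i ∈ s, φ (z i) := by
  classical
  induction s using Finset.induction_on with
  | empty => simp [h.map_zero]
  | insert i s hi ih =>
    rw [Finset.sum_insert hi, Finset.sum_insert hi]
    linarith [h.map_add_le (hz i) (Finset.sum_nonneg fun j (_ : j ∈ s) => hz j)]

theorem map_tsum_le (h : A1 φ φD γ) {ι : Type*} {z : ι → ℝ} (hz : ∀ i, 0 ≤ z i)
    (hs : Summable z) : φ (∑' i, z i) ≤ ∑' i, φ (z i) := by
  refine le_of_forall_pos_le_add fun ε hε => ?_
  obtain ⟨t, ht⟩ := (hs.hasSum.eventually (Ioi_mem_nhds (sub_lt_self _ hε))).exists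
  have hsum : ∑ i ∈ t, z i ≤ ∑' i, z i := hs.sum_le_tsum t fun i _ => hz i
  calc φ (∑' i, z i) ≤ φ (∑ i ∈ t, z i) + (∑' i, z i - ∑ i ∈ t, z i) :=
        h.map_le_add_sub (Finset.sum_nonneg fun i _ => hz i) hsum
    _ ≤ ∑ i ∈ t, φ (z i) + ε := by
        linarith [h.map_sum_le t hz, show ∑' i, z i - ε < ∑ i ∈ t, z i from ht]
    _ ≤ ∑' i, φ (z i) + ε := by
        linarith [(h.summable_comp hz hs).sum_le_tsum t fun i _ => h.nonneg _ (hz i)]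

end A1

section Atoms

variable {α : Type*} [MeasurableSpace α] [MeasurableSingletonClass α] {m : Measure α}
  [IsFiniteMeasure m] {A : Set α}

theorem hasSum_measureReal_singleton (hA : A.Countable) :
    HasSum (fun x : A => m.real {(x : α)}) (m.real A) := by
  have hsum : ∑' x : A, m {(x : α)} = m A := by
    simpa using tsum_measure_preimage_singleton (μ := m) hA (f := id)
      fun _ _ => measurableSet_singleton _
  have := ENNReal.hasSum_toReal (f := fun x : A => m {(x : α)}) (hsum ▸ measure_ne_top m A)
  rwa [← ENNReal.tsum_toReal_eq fun _ => measure_ne_top _ _, hsum] at this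

variable {φ φD : ℝ → ℝ} {γ : ℝ}

theorem A1.summable_map_measureReal_singleton (h : A1 φ φD γ) (hA : A.Countable) :
    Summable fun x : A => φ (m.real {(x : α)}) :=
  h.summable_comp (fun _ => measureReal_nonneg) (hasSum_measureReal_singleton hA).summable

theorem A1.map_measureReal_le (h : A1 φ φD γ) (hA : A.Countable) (E : Set α) :
    φ (m.real E) ≤ m.real (E \ A) + ∑' x : ↥(E ∩ A), φ (m.real {(x : α)}) := by
  have hEA : (E ∩ A).Countable := hA.mono inter_subset_right
  calc φ (m.real E) = φ (m.real (E \ A) + m.real (E ∩ A)) := by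
        rw [measureReal_sdiff_add_inter hA.measurableSet]
    _ ≤ m.real (E \ A) + φ (m.real (E ∩ A)) :=
        h.map_add_le_add measureReal_nonneg measureReal_nonneg
    _ ≤ _ := by
        rw [(hasSum_measureReal_singleton hEA).tsum_eq.symm]
        exact add_le_add_right (h.map_tsum_le (fun _ => measureReal_nonneg)
          (hasSum_measureReal_singleton hEA).summable) _

theorem A1.sum_map_measureReal_le (h : A1 φ φD γ) (hA : A.Countable) {ι : Type*}
    {s : Finset ι} {W : ι → Set α} (hW : ∀ i ∈ s, MeasurableSet (W i))
    (hd : (s : Set ι).PairwiseDisjoint W) :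
    ∑ i ∈ s, φ (m.real (W i)) ≤ m.real Aᶜ + ∑' x : A, φ (m.real {(x : α)}) := by
  have hsub : ⋃ i ∈ s, W i ∩ A ⊆ A := iUnion₂_subset fun _ _ => inter_subset_right
  calc ∑ i ∈ s, φ (m.real (W i))
      ≤ ∑ i ∈ s, (m.real (W i \ A) + ∑' x : ↥(W i ∩ A), φ (m.real {(x : α)})) :=
        Finset.sum_le_sum fun i hi => h.map_measureReal_le hA (W i)
    _ = m.real (⋃ i ∈ s, W i \ A) + ∑' x : ↥(⋃ i ∈ s, W i ∩ A), φ (m.real {(x : α)}) := by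
        have hdiff : m.real (⋃ i ∈ s, W i \ A) = ∑ i ∈ s, m.real (W i \ A) :=
          measureReal_biUnion_finset (hd.mono fun _ => sdiff_subset)
            fun i hi => (hW i hi).diff hA.measurableSet
        have hatoms : ∑' x : ↥(⋃ i ∈ s, W i ∩ A), φ (m.real {(x : α)}) =
            ∑ i ∈ s, ∑' x : ↥(W i ∩ A), φ (m.real {(x : α)}) :=
          Summable.tsum_finset_bUnion_disjoint (f := fun x => φ (m.real {x}))
            (hd.mono fun _ => inter_subset_left)
            fun i _ => h.summable_map_measureReal_singleton (hA.mono inter_subset_right)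
        rw [Finset.sum_add_distrib, hdiff, hatoms]
    _ ≤ m.real Aᶜ + ∑' x : A, φ (m.real {(x : α)}) :=
        add_le_add (measureReal_mono (iUnion₂_subset fun _ _ => sdiff_subset_compl _ _))
          (tsum_comp_le_tsum_of_inj (h.summable_map_measureReal_singleton hA)
            (fun _ => h.nonneg _ measureReal_nonneg) (inclusion_injective hsub))

end Atoms

section PhiPen

variable {α : Type*} [MeasurableSpace α] [MeasurableSingletonClass α] {φ φD : ℝ → ℝ} {γ : ℝ}

theorem atomsOf_countable (ν : SignedMeasure α) : (atomsOf ν).Countable :=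
  (Measure.countable_meas_pos_of_disjoint_iUnion (μ := ν.totalVariation)
    (fun _ => measurableSet_singleton _)
    fun _ _ hxy => disjoint_singleton.2 hxy).mono fun _ hx => pos_iff_ne_zero.2 hx

theorem A1.sum_map_totalVariation_le_PhiPen (h : A1 φ φD γ) (ν : SignedMeasure α) {ι : Type*}
    {s : Finset ι} {W : ι → Set α} (hW : ∀ i ∈ s, MeasurableSet (W i))
    (hd : (s : Set ι).PairwiseDisjoint W) :
    ∑ i ∈ s, φ (ν.totalVariation.real (W i)) ≤ PhiPen φ ν :=
  h.sum_map_measureReal_le (atomsOf_countable ν) hW hd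

theorem A1.PhiPen_le_totalVariation (h : A1 φ φD γ) (ν : SignedMeasure α) :
    PhiPen φ ν ≤ ν.totalVariation.real univ := by
  have hA := hasSum_measureReal_singleton (m := ν.totalVariation) (atomsOf_countable ν)
  have hφ : ∑' x : atomsOf ν, φ (ν.totalVariation.real {(x : α)}) ≤
      ν.totalVariation.real (atomsOf ν) :=
    hA.tsum_eq ▸ Summable.tsum_le_tsum (fun _ => h.le_self measureReal_nonneg)
      (h.summable_map_measureReal_singleton (atomsOf_countable ν)) hA.summable
  change ν.totalVariation.real (atomsOf ν)ᶜ +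
    ∑' x : atomsOf ν, φ (ν.totalVariation.real {(x : α)}) ≤ _
  rw [← measureReal_add_measureReal_compl (atomsOf_countable ν).measurableSet]
  linarith

end PhiPen

section ClosedPieces

variable {α : Type*} [TopologicalSpace α] [MeasurableSpace α] {m : Measure α}
  [IsFiniteMeasure m]

theorem MeasurableSet.exists_isClosed_measureReal_lt_add [m.WeaklyRegular] {s : Set α}
    (hs : MeasurableSet s) {ε : ℝ} (hε : 0 < ε) :
    ∃ K ⊆ s, IsClosed K ∧ m.real s < m.real K + ε := by
  obtain ⟨K, hKs, hK, hlt⟩ := hs.exists_isClosed_lt_add (measure_ne_top m s)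
    (ENNReal.ofReal_pos.2 hε).ne'
  refine ⟨K, hKs, hK, ?_⟩
  have := (ENNReal.toReal_lt_toReal (measure_ne_top m s) (by finiteness)).2 hlt
  rwa [ENNReal.toReal_add (measure_ne_top m K) ENNReal.ofReal_ne_top,
    ENNReal.toReal_ofReal hε.le] at this

theorem MeasurableSet.exists_isClosed_subset_inter_measureReal_lt_add [m.WeaklyRegular]
    {U T : Set α} (hU : MeasurableSet U) (hT : MeasurableSet T) (hmT : m Tᶜ = 0) {ε : ℝ}
    (hε : 0 < ε) : ∃ K ⊆ U ∩ T, IsClosed K ∧ m.real U < m.real K + ε := by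
  obtain ⟨K, hK, hKc, hlt⟩ := (hU.inter hT).exists_isClosed_measureReal_lt_add (m := m) hε
  have hUT : m.real (U \ T) = 0 := by
    simp [Measure.real, measure_mono_null (sdiff_subset_compl U T) hmT]
  refine ⟨K, hK, hKc, ?_⟩
  rw [← measureReal_inter_add_sdiff (s := U) hT]
  linarith

theorem exists_finset_isClosed_subordinate [OpensMeasurableSpace α] [m.WeaklyRegular]
    (𝒰 : Finset (Set α)) (h𝒰 : ∀ U ∈ 𝒰, MeasurableSet U) {S : Set α} (hS : MeasurableSet S)
    (hS𝒰 : S ⊆ ⋃₀ ↑𝒰) {ε : ℝ} (hε : 0 < ε) :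
    ∃ 𝒞 : Finset (Set α), (∀ C ∈ 𝒞, IsClosed C ∧ C ⊆ S ∧ ∃ U ∈ 𝒰, C ⊆ U) ∧
      (𝒞 : Set (Set α)).PairwiseDisjoint id ∧ m.real S < m.real (⋃₀ ↑𝒞) + ε := by
  classical
  induction 𝒰 using Finset.induction_on generalizing S ε with
  | empty =>
    refine ⟨∅, by simp, by simp, ?_⟩
    simp_all [subset_empty_iff.1 (by simpa using hS𝒰)]
  | insert U 𝒰 hU ih =>
    have hUm : MeasurableSet U := h𝒰 U (Finset.mem_insert_self U 𝒰)
    obtain ⟨C₀, hC₀, hC₀c, hC₀m⟩ := (hS.inter hUm).exists_isClosed_measureReal_lt_add (m := m)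
      (half_pos hε)
    obtain ⟨𝒞, h𝒞, h𝒞d, h𝒞m⟩ := ih (fun V hV => h𝒰 V (Finset.mem_insert_of_mem hV))
      (hS.diff hUm) (fun x hx => by simpa [hx.2] using hS𝒰 hx.1) (half_pos hε)
    have hsep : ∀ C ∈ 𝒞, Disjoint C₀ C := fun C hC =>
      disjoint_of_subset (hC₀.trans inter_subset_right)
        ((h𝒞 C hC).2.1.trans fun _ hx => hx.2) disjoint_compl_right
    refine ⟨insert C₀ 𝒞, ?_, ?_, ?_⟩
    · simp only [Finset.mem_insert, forall_eq_or_imp]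
      refine ⟨⟨hC₀c, hC₀.trans inter_subset_left, U, Or.inl rfl,
        hC₀.trans inter_subset_right⟩, fun C hC => ?_⟩
      obtain ⟨hCc, hCS, V, hV, hCV⟩ := h𝒞 C hC
      exact ⟨hCc, hCS.trans sdiff_subset, V, Or.inr hV, hCV⟩
    · rw [Finset.coe_insert]
      exact h𝒞d.insert fun C hC _ => hsep C hC
    · have h𝒞meas : MeasurableSet (⋃₀ (𝒞 : Set (Set α))) :=
        .sUnion 𝒞.countable_toSet fun C hC => (h𝒞 C hC).1.measurableSet
      rw [Finset.coe_insert, sUnion_insert,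
        measureReal_union (disjoint_sUnion_right.2 hsep) h𝒞meas,
        ← measureReal_inter_add_sdiff (s := S) hUm]
      linarith

end ClosedPieces

section DiffusePieces

variable {α : Type*} [TopologicalSpace α] [MeasurableSpace α] {m : Measure α} [IsFiniteMeasure m]
  {φ φD : ℝ → ℝ} {γ : ℝ}

theorem exists_finset_isOpen_cover_measureReal_lt [CompactSpace α] [NullSingletonClass m]
    [m.OuterRegular] {δ : ℝ} (hδ : 0 < δ) :
    ∃ 𝒰 : Finset (Set α), (∀ U ∈ 𝒰, IsOpen U ∧ m.real U < δ) ∧ ⋃₀ (𝒰 : Set (Set α)) = univ := by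
  classical
  have hsmall : ∀ x : α, ∃ U, x ∈ U ∧ IsOpen U ∧ m U < ENNReal.ofReal δ := fun x => by
    obtain ⟨U, hxU, hU, hlt⟩ := Set.exists_isOpen_lt_of_lt {x} (ENNReal.ofReal δ)
      (by rw [measure_singleton (μ := m)]; exact ENNReal.ofReal_pos.2 hδ)
    exact ⟨U, hxU rfl, hU, hlt⟩
  choose U hxU hU hlt using hsmall
  obtain ⟨t, ht⟩ := isCompact_univ.elim_finite_subcover U hU fun x _ => mem_iUnion.2 ⟨x, hxU x⟩
  refine ⟨t.image U, ?_, ?_⟩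
  · simp only [Finset.mem_image]
    rintro _ ⟨x, -, rfl⟩
    exact ⟨hU x, (ENNReal.toReal_lt_toReal (measure_ne_top m _) ENNReal.ofReal_ne_top).2 (hlt x)
      |>.trans_eq (ENNReal.toReal_ofReal hδ.le)⟩
  · rw [Finset.coe_image, sUnion_image]
    exact univ_subset_iff.1 ht

/-- `φ` is almost linear near `0`, and without atoms `S` can be chopped into closed pieces of
small mass, so the chopping loses almost nothing. -/
theorem A1.exists_finset_isClosed_measureReal_sub_le_sum [CompactSpace α] [OpensMeasurableSpace α]
    [m.WeaklyRegular] [NullSingletonClass m] (h : A1 φ φD γ) {S : Set α} (hS : MeasurableSet S)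
    {ε : ℝ} (hε : 0 < ε) :
    ∃ 𝒞 : Finset (Set α), (∀ C ∈ 𝒞, IsClosed C ∧ C ⊆ S) ∧ (𝒞 : Set (Set α)).PairwiseDisjoint id ∧
      m.real S - ε ≤ ∑ C ∈ 𝒞, φ (m.real C) := by
  set ε' := ε / (2 * (m.real S + 1))
  have hε' : 0 < ε' := div_pos hε (by positivity)
  have hε'S : ε' * m.real S ≤ ε / 2 := by
    rw [div_mul_eq_mul_div, div_le_div_iff₀ (by positivity) two_pos]
    nlinarith [measureReal_nonneg (μ := m) (s := S)]
  obtain ⟨δ, hδ, hφδ⟩ := h.exists_mul_le hε'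
  obtain ⟨𝒰, h𝒰, h𝒰univ⟩ := exists_finset_isOpen_cover_measureReal_lt (m := m) hδ
  obtain ⟨𝒞, h𝒞, h𝒞d, h𝒞m⟩ := exists_finset_isClosed_subordinate (m := m) 𝒰
    (fun U hU => (h𝒰 U hU).1.measurableSet) hS (h𝒰univ ▸ subset_univ S) (half_pos hε)
  refine ⟨𝒞, fun C hC => ⟨(h𝒞 C hC).1, (h𝒞 C hC).2.1⟩, h𝒞d, ?_⟩
  have hsum : m.real (⋃₀ ↑𝒞) = ∑ C ∈ 𝒞, m.real C := by
    rw [sUnion_eq_biUnion]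
    exact measureReal_biUnion_finset h𝒞d fun C hC => (h𝒞 C hC).1.measurableSet
  have hle : m.real (⋃₀ ↑𝒞) ≤ m.real S := measureReal_mono (sUnion_subset fun C hC => (h𝒞 C hC).2.1)
  have hφ : ∀ C ∈ 𝒞, (1 - ε') * m.real C ≤ φ (m.real C) := fun C hC => by
    obtain ⟨-, -, U, hU, hCU⟩ := h𝒞 C hC
    exact hφδ _ ⟨measureReal_nonneg, (measureReal_mono hCU).trans (h𝒰 U hU).2.le⟩
  calc m.real S - ε ≤ (1 - ε') * m.real (⋃₀ ↑𝒞) := by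
        nlinarith [mul_le_mul_of_nonneg_left hle hε'.le]
    _ = ∑ C ∈ 𝒞, (1 - ε') * m.real C := by rw [hsum, Finset.mul_sum]
    _ ≤ ∑ C ∈ 𝒞, φ (m.real C) := Finset.sum_le_sum hφ

end DiffusePieces

theorem Set.PairwiseDisjoint.exists_isOpen_superset {X ι : Type*} [TopologicalSpace X]
    [NormalSpace X] {s : Set ι} {K : ι → Set X} (hd : s.PairwiseDisjoint K) (hs : s.Finite)
    (hK : ∀ i ∈ s, IsClosed (K i)) :
    ∃ W : ι → Set X, (∀ i, IsOpen (W i)) ∧ (∀ i, K i ⊆ W i) ∧ s.PairwiseDisjoint W := by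
  have hnhds : s.PairwiseDisjoint fun i => 𝓝ˢ (K i) := fun i hi j hj hij =>
    disjoint_nhdsSet_nhdsSet (hK i hi) (hK j hj) (hd hi hj hij)
  obtain ⟨N, hN, hNd⟩ := hnhds.exists_mem_filter hs
  exact ⟨fun i => interior (N i), fun _ => isOpen_interior,
    fun i => subset_interior_iff_mem_nhdsSet.2 (hN i), hNd.mono fun _ => interior_subset⟩

theorem exists_continuous_abs_le_one_eqOn {α : Type*} [TopologicalSpace α] [NormalSpace α]
    {U K₁ K₂ : Set α} (hU : IsOpen U)
    (hK₁ : IsClosed K₁) (hK₂ : IsClosed K₂) (h₁ : K₁ ⊆ U) (h₂ : K₂ ⊆ U) (hd : Disjoint K₁ K₂) :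
    ∃ g : C(α, ℝ), (∀ x, |g x| ≤ 1) ∧ EqOn g 1 K₁ ∧ EqOn g (-1) K₂ ∧ EqOn g 0 Uᶜ := by
  obtain ⟨g₁, hg₁0, hg₁1, hg₁⟩ := exists_continuous_zero_one_of_isClosed
    (hK₂.union hU.isClosed_compl) hK₁
    (disjoint_union_left.2 ⟨hd.symm, disjoint_compl_left.mono_right h₁⟩)
  obtain ⟨g₂, hg₂0, hg₂1, hg₂⟩ := exists_continuous_zero_one_of_isClosed
    (hK₁.union hU.isClosed_compl) hK₂
    (disjoint_union_left.2 ⟨hd, disjoint_compl_left.mono_right h₂⟩)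
  refine ⟨g₁ - g₂, fun x => abs_le.2 ⟨?_, ?_⟩, fun x hx => ?_, fun x hx => ?_, fun x hx => ?_⟩
  · linarith [ContinuousMap.sub_apply g₁ g₂ x, (hg₁ x).1, (hg₂ x).2]
  · linarith [ContinuousMap.sub_apply g₁ g₂ x, (hg₁ x).2, (hg₂ x).1]
  · simp [hg₁1 hx, hg₂0 (Or.inl hx)]
  · simp [hg₁0 (Or.inl hx), hg₂1 hx]
  · simp [hg₁0 (Or.inr hx), hg₂0 (Or.inr hx)]

section Singletons

variable {α : Type*} [DecidableEq (Set α)] {𝒞 : Finset (Set α)} {t : Finset α}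

theorem pairwiseDisjoint_union_image_singleton (h𝒞 : (𝒞 : Set (Set α)).PairwiseDisjoint id)
    (h𝒞t : ∀ C ∈ 𝒞, Disjoint C t) :
    ((𝒞 ∪ t.image fun x => {x} : Finset (Set α)) : Set (Set α)).PairwiseDisjoint id := by
  rw [Finset.coe_union, Finset.coe_image, pairwiseDisjoint_union]
  refine ⟨h𝒞, ?_, ?_⟩
  · rintro _ ⟨x, -, rfl⟩ _ ⟨y, -, rfl⟩ hxy
    exact disjoint_singleton.2 fun h => hxy (congrArg _ h)
  · rintro C hC _ ⟨x, hx, rfl⟩ -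
    exact (h𝒞t C hC).mono_right (singleton_subset_iff.2 hx)

theorem sum_union_image_singleton {M : Type*} [AddCommMonoid M] (h𝒞t : ∀ C ∈ 𝒞, Disjoint C t)
    (f : Set α → M) :
    ∑ K ∈ 𝒞 ∪ t.image (fun x => {x}), f K = ∑ C ∈ 𝒞, f C + ∑ x ∈ t, f {x} := by
  rw [Finset.sum_union, Finset.sum_image fun x _ y _ hxy => singleton_injective hxy]
  refine Finset.disjoint_left.2 fun C hC hCt => ?_
  obtain ⟨x, hx, rfl⟩ := Finset.mem_image.1 hCt
  exact Set.disjoint_left.1 (h𝒞t _ hC) (mem_singleton x) hx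

end Singletons

section GoodFamily

variable {α : Type*} [TopologicalSpace α] [TopologicalSpace.MetrizableSpace α] [CompactSpace α]
  [MeasurableSpace α] [BorelSpace α] {φ φD : ℝ → ℝ} {γ : ℝ}

theorem A1.exists_finset_isClosed_le_sum (h : A1 φ φD γ) (m : Measure α) [IsFiniteMeasure m]
    {A : Set α} (hA : A.Countable) (hAc : ∀ x ∉ A, m {x} = 0) {ε : ℝ} (hε : 0 < ε) :
    ∃ 𝒦 : Finset (Set α), (∀ K ∈ 𝒦, IsClosed K) ∧ (𝒦 : Set (Set α)).PairwiseDisjoint id ∧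
      m.real Aᶜ + ∑' x : A, φ (m.real {(x : α)}) ≤ ∑ K ∈ 𝒦, φ (m.real K) + ε := by
  classical
  obtain ⟨t, ht⟩ := ((h.summable_map_measureReal_singleton (m := m) hA).hasSum.eventually
    (Ioi_mem_nhds (sub_lt_self _ (half_pos hε)))).exists
  set T : Finset α := t.map (Function.Embedding.subtype (· ∈ A))
  have hTA : (T : Set α) ⊆ A := by
    rw [Finset.coe_map]
    exact Subtype.coe_image_subset _ _
  have hT : IsClosed (T : Set α) := T.finite_toSet.isClosed
  let ν := m.restrict Aᶜ
  have : NullSingletonClass ν := ⟨fun x => by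
    rw [Measure.restrict_apply (measurableSet_singleton x)]
    by_cases hx : x ∈ A
    · simp [hx]
    · exact measure_mono_null inter_subset_left (hAc x hx)⟩
  obtain ⟨𝒞, h𝒞, h𝒞d, h𝒞sum⟩ :=
    h.exists_finset_isClosed_measureReal_sub_le_sum (m := ν) hT.isOpen_compl.measurableSet
      (half_pos hε)
  have h𝒞T : ∀ C ∈ 𝒞, Disjoint C T := fun C hC => disjoint_compl_left.mono_left (h𝒞 C hC).2
  refine ⟨𝒞 ∪ T.image fun x => {x}, ?_, pairwiseDisjoint_union_image_singleton h𝒞d h𝒞T, ?_⟩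
  · simp only [Finset.mem_union, Finset.mem_image]
    rintro K (hK | ⟨x, -, rfl⟩)
    exacts [(h𝒞 K hK).1, isClosed_singleton]
  have hνT : ν.real (↑T)ᶜ = m.real Aᶜ := by
    rw [measureReal_restrict_apply hT.isOpen_compl.measurableSet,
      inter_eq_right.2 (compl_subset_compl.2 hTA)]
  have hνm : ∑ C ∈ 𝒞, φ (ν.real C) ≤ ∑ C ∈ 𝒞, φ (m.real C) := Finset.sum_le_sum fun C _ =>
    h.mono measureReal_nonneg measureReal_nonneg
      (ENNReal.toReal_mono (measure_ne_top m C) (Measure.restrict_apply_le _ _))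
  have hatoms : ∑' x : A, φ (m.real {(x : α)}) - ε / 2 < ∑ x ∈ T, φ (m.real {x}) := by
    rw [Finset.sum_map]
    exact ht
  rw [sum_union_image_singleton h𝒞T]
  linarith

theorem A1.exists_isOpen_PhiPen_le_sum (h : A1 φ φD γ) (μ : SignedMeasure α) {ε : ℝ}
    (hε : 0 < ε) :
    ∃ (𝒦 : Finset (Set α)) (W : Set α → Set α), (∀ K, IsOpen (W K)) ∧
      (𝒦 : Set (Set α)).PairwiseDisjoint W ∧
      PhiPen φ μ ≤ ∑ K ∈ 𝒦, φ (μ.totalVariation.real (W K)) + ε := by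
  obtain ⟨𝒦, h𝒦c, h𝒦d, hle⟩ := h.exists_finset_isClosed_le_sum μ.totalVariation
    (atomsOf_countable μ) (fun _ hx => not_not.1 hx) hε
  obtain ⟨W, hWo, hKW, hWd⟩ := h𝒦d.exists_isOpen_superset 𝒦.finite_toSet h𝒦c
  refine ⟨𝒦, W, hWo, hWd, hle.trans (add_le_add_left (Finset.sum_le_sum fun K _ => ?_) ε)⟩
  exact h.mono measureReal_nonneg measureReal_nonneg (measureReal_mono (hKW K))

end GoodFamily

section Integrals

variable {α : Type*} [MeasurableSpace α] {m : Measure α} [IsFiniteMeasure m]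

theorem abs_integral_le_measureReal {U : Set α} (hU : MeasurableSet U) {g : α → ℝ}
    (hg : ∀ x, |g x| ≤ 1) (hg0 : ∀ x ∉ U, g x = 0) : |∫ x, g x ∂m| ≤ m.real U := by
  rw [← integral_indicator_one hU, ← Real.norm_eq_abs]
  refine norm_integral_le_of_norm_le ((integrable_const 1).indicator hU) (ae_of_all _ fun x => ?_)
  by_cases hx : x ∈ U
  · simpa [hx] using hg x
  · simp [hx, hg0 x hx]

theorem measureReal_sub_le_integral {U K : Set α} (hU : MeasurableSet U) (hK : MeasurableSet K)
    {g : α → ℝ} (hgi : Integrable g m) (hg : ∀ x, -1 ≤ g x) (hgK : ∀ x ∈ K, g x = 1)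
    (hg0 : ∀ x ∉ U, g x = 0) : m.real K - m.real (U \ K) ≤ ∫ x, g x ∂m := by
  have hKi : Integrable (K.indicator (1 : α → ℝ)) m := (integrable_const 1).indicator hK
  have hUKi : Integrable ((U \ K).indicator (1 : α → ℝ)) m :=
    (integrable_const 1).indicator (hU.diff hK)
  rw [← integral_indicator_one hK, ← integral_indicator_one (hU.diff hK), ← integral_sub hKi hUKi]
  refine integral_mono (hKi.sub hUKi) hgi fun x => ?_
  by_cases hxK : x ∈ K
  · simp [hxK, hgK x hxK]
  by_cases hxU : x ∈ U
  · simp [hxK, hxU, hg x]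
  · simp [hxK, hxU, hg0 x hxU]

end Integrals

section SignedMeasure

variable {α : Type*} [MeasurableSpace α]

theorem sInt_le_totalVariation (ν : SignedMeasure α) {U : Set α} (hU : MeasurableSet U)
    {g : α → ℝ} (hg : ∀ x, |g x| ≤ 1) (hg0 : ∀ x ∉ U, g x = 0) :
    sInt ν g ≤ ν.totalVariation.real U := by
  have hp := abs_integral_le_measureReal (m := ν.toJordanDecomposition.posPart) hU hg hg0
  have hn := abs_integral_le_measureReal (m := ν.toJordanDecomposition.negPart) hU hg hg0
  rw [SignedMeasure.totalVariation, measureReal_add_apply, sInt]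
  linarith [(abs_le.1 hp).2, (abs_le.1 hn).1]

variable [TopologicalSpace α] [CompactSpace α] [BorelSpace α]

noncomputable def sIntCLM (ν : SignedMeasure α) : C(α, ℝ) →L[ℝ] ℝ :=
  L1.integralCLM.comp (ContinuousMap.toLp 1 ν.toJordanDecomposition.posPart ℝ) -
    L1.integralCLM.comp (ContinuousMap.toLp 1 ν.toJordanDecomposition.negPart ℝ)

theorem sIntCLM_apply (ν : SignedMeasure α) (g : C(α, ℝ)) : sIntCLM ν g = sInt ν g := by
  simp only [sIntCLM, sInt, sub_apply, ContinuousLinearMap.comp_apply,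
    ← L1.integral_def, L1.integral_eq_integral]
  rw [integral_congr_ae (ContinuousMap.coeFn_toLp _ g),
    integral_congr_ae (ContinuousMap.coeFn_toLp _ g)]

variable [TopologicalSpace.PseudoMetrizableSpace α]

theorem exists_continuous_totalVariation_le_sInt (ν : SignedMeasure α) {U : Set α}
    (hU : IsOpen U) {ε : ℝ} (hε : 0 < ε) :
    ∃ g : C(α, ℝ), (∀ x, |g x| ≤ 1) ∧ (∀ x ∉ U, g x = 0) ∧
      ν.totalVariation.real U ≤ sInt ν g + ε := by
  set p := ν.toJordanDecomposition.posPart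
  set n := ν.toJordanDecomposition.negPart
  obtain ⟨S, hS, hpS, hnS⟩ := ν.toJordanDecomposition.mutuallySingular
  obtain ⟨Kp, hKp, hKpc, hpK⟩ := hU.measurableSet.exists_isClosed_subset_inter_measureReal_lt_add
    (m := p) hS.compl (by rwa [compl_compl]) (by positivity : 0 < ε / 4)
  obtain ⟨Kn, hKn, hKnc, hnK⟩ := hU.measurableSet.exists_isClosed_subset_inter_measureReal_lt_add
    (m := n) hS hnS (by positivity : 0 < ε / 4)
  obtain ⟨g, hg1, hgp, hgn, hg0⟩ := exists_continuous_abs_le_one_eqOn hU hKpc hKnc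
    (hKp.trans inter_subset_left) (hKn.trans inter_subset_left)
    (disjoint_of_subset (hKp.trans inter_subset_right) (hKn.trans inter_subset_right)
      disjoint_compl_left)
  have hint : ∀ m : Measure α, IsFiniteMeasure m → Integrable g m := fun m _ =>
    g.continuous.integrable_of_hasCompactSupport (HasCompactSupport.of_compactSpace g)
  have hIp := measureReal_sub_le_integral (m := p) hU.measurableSet hKpc.measurableSet
    (hint p inferInstance) (fun x => (abs_le.1 (hg1 x)).1) (fun x hx => hgp hx)
    (fun x hx => hg0 hx)
  have hIn := measureReal_sub_le_integral (m := n) (g := fun x => -g x) hU.measurableSet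
    hKnc.measurableSet
    (hint n inferInstance).neg (fun x => by linarith [(abs_le.1 (hg1 x)).2])
    (fun x hx => by simp [hgn hx]) (fun x hx => by simp [hg0 hx])
  rw [measureReal_sdiff (hKp.trans inter_subset_left) hKpc.measurableSet] at hIp
  rw [measureReal_sdiff (hKn.trans inter_subset_left) hKnc.measurableSet, integral_neg] at hIn
  refine ⟨g, hg1, fun x hx => hg0 hx, ?_⟩
  rw [SignedMeasure.totalVariation, measureReal_add_apply, sInt]
  linarith

variable {μs : ℕ → SignedMeasure α} {μ : SignedMeasure α}

theorem exists_totalVariation_le_of_tendsto_sInt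
    (hconv : ∀ g : C(α, ℝ), Tendsto (fun k => sInt (μs k) g) atTop (𝓝 (sInt μ g))) :
    ∃ C, ∀ k, (μs k).totalVariation.real univ ≤ C := by
  obtain ⟨C, hC⟩ := banach_steinhaus (g := fun k => sIntCLM (μs k)) fun g => by
    obtain ⟨c, hc⟩ := (hconv g).norm.bddAbove_range
    exact ⟨c, fun k => (sIntCLM_apply (μs k) g).symm ▸ hc ⟨k, rfl⟩⟩
  refine ⟨C + 1, fun k => ?_⟩
  obtain ⟨g, hg1, -, hg⟩ := exists_continuous_totalVariation_le_sInt (μs k) isOpen_univ one_pos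
  have hgnorm : ‖g‖ ≤ 1 := (ContinuousMap.norm_le _ zero_le_one).2 fun x => hg1 x
  have hgC : sInt (μs k) g ≤ C :=
    calc sInt (μs k) g ≤ ‖sIntCLM (μs k) g‖ := (sIntCLM_apply (μs k) g) ▸ le_abs_self _
      _ ≤ C * ‖g‖ := (sIntCLM (μs k)).le_of_opNorm_le (hC k) g
      _ ≤ C := mul_le_of_le_one_right ((norm_nonneg _).trans (hC k)) hgnorm
  linarith

theorem eventually_totalVariation_sub_le
    (hconv : ∀ g : C(α, ℝ), Tendsto (fun k => sInt (μs k) g) atTop (𝓝 (sInt μ g)))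
    {U : Set α} (hU : IsOpen U) {ε : ℝ} (hε : 0 < ε) :
    ∀ᶠ k in atTop, μ.totalVariation.real U - ε ≤ (μs k).totalVariation.real U := by
  obtain ⟨g, hg1, hg0, hg⟩ := exists_continuous_totalVariation_le_sInt μ hU (half_pos hε)
  filter_upwards [(hconv g).eventually (lt_mem_nhds (sub_lt_self _ (half_pos hε)))] with k hk
  linarith [sInt_le_totalVariation (μs k) hU.measurableSet hg1 hg0]

theorem A1.eventually_sum_sub_le {φ φD : ℝ → ℝ} {γ : ℝ} (h : A1 φ φD γ)
    (hconv : ∀ g : C(α, ℝ), Tendsto (fun k => sInt (μs k) g) atTop (𝓝 (sInt μ g)))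
    {ι : Type*} (s : Finset ι) {W : ι → Set α} (hW : ∀ i, IsOpen (W i)) {ε : ℝ} (hε : 0 < ε) :
    ∀ᶠ k in atTop, ∑ i ∈ s, φ (μ.totalVariation.real (W i)) - ε ≤
      ∑ i ∈ s, φ ((μs k).totalVariation.real (W i)) := by
  set η := ε / (s.card + 1)
  have hη : 0 < η := by positivity
  have hcard : s.card * η ≤ ε := by
    rw [← mul_div_assoc, div_le_iff₀ (by positivity)]
    nlinarith
  filter_upwards [(eventually_all_finset s).2 fun i _ =>
    eventually_totalVariation_sub_le hconv (hW i) hη] with k hk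
  have := Finset.sum_le_sum fun i hi =>
    h.sub_le_map_of_sub_le hη.le measureReal_nonneg measureReal_nonneg (hk i hi)
  rw [Finset.sum_sub_distrib, Finset.sum_const, nsmul_eq_mul] at this
  linarith

end SignedMeasure

/-- Let `φ` satisfy (A1). Then `Φ` is sequentially weak-* lower
semicontinuous on `M(Ω)` for compact `Ω ⊂ ℝ^{d+1}`: if `μ⁽ᵏ⁾ → μ` weak-*, i.e.
`∫ g dμ⁽ᵏ⁾ → ∫ g dμ` for every continuous `g : Ω → ℝ`, then
`liminf_k Φ(μ⁽ᵏ⁾) ≥ Φ(μ)`. -/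
theorem PhiPen_weakStar_lsc (d : ℕ)
    (Ω : Set (EuclideanSpace ℝ (Fin (d + 1)))) (hΩ : IsCompact Ω)
    (φ φD : ℝ → ℝ) (γ : ℝ) (hA1 : A1 φ φD γ)
    (μs : ℕ → SignedMeasure ↥Ω) (μ : SignedMeasure ↥Ω)
    (hconv : ∀ g : C(↥Ω, ℝ),
      Filter.Tendsto (fun k => sInt (μs k) g) Filter.atTop (nhds (sInt μ g))) :
    PhiPen φ μ ≤ Filter.liminf (fun k => PhiPen φ (μs k)) Filter.atTop := by
  have : CompactSpace Ω := isCompact_iff_compactSpace.1 hΩ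
  obtain ⟨C, hC⟩ := exists_totalVariation_le_of_tendsto_sInt hconv
  have hbdd : IsCoboundedUnder (· ≥ ·) atTop fun k => PhiPen φ (μs k) :=
    isCoboundedUnder_ge_of_le _ fun k => (hA1.PhiPen_le_totalVariation (μs k)).trans (hC k)
  refine le_of_forall_pos_le_add fun ε hε => ?_
  obtain ⟨𝒦, W, hWo, hWd, hΦ⟩ := hA1.exists_isOpen_PhiPen_le_sum μ (half_pos hε)
  have hev : ∀ᶠ k in atTop, PhiPen φ μ - ε ≤ PhiPen φ (μs k) := by
    filter_upwards [hA1.eventually_sum_sub_le hconv 𝒦 hWo (half_pos hε)] with k hk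
    linarith [hA1.sum_map_totalVariation_le_PhiPen (μs k) (fun K _ => (hWo K).measurableSet) hWd]
  linarith [le_liminf_of_le hbdd hev]
end

section
/- Let N ∈ ℕ, d ≥ 1, and let l: L²(D,ν) → ℝ be any function of the network output, where the ReLU network with weights (a_n, b_n, c_n), n = 1,…,N, is N_{ω,c}(x) = Σ_{n=1}^N c_n max{a_n·x + b_n, 0}. Then the infimum over all (a_n, b_n, c_n) ∈ ℝ^d × ℝ × ℝ of l(N_{ω,c}) + (α/2) Σ_{n=1}^N (‖(a_n,b_n)‖² + |c_n|²) equals the infimum over all c_n ∈ ℝ and (a_n,b_n) ∈ S^d (the unit sphere in ℝ^{d+1}) of l(N_{ω,c}) + α Σ_{n=1}^N |c_n|; i.e., the all-weights ℓ₂ penalization problem and the ℓ₁ outer-weight penalization problem with normalized inner weights have the same optimal value. -/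
/-- The unit sphere `S^d = {(a,b) ∈ ℝ^d × ℝ : ‖a‖² + b² = 1}`. -/
def UnitSphereProd (d : ℕ) : Type :=
  { ab : EuclideanSpace ℝ (Fin d) × ℝ // ‖ab.1‖ ^ 2 + ab.2 ^ 2 = 1 }

/-!
By positive homogeneity, a neuron `(a, b, c)` computes the same function as
`(τ • a, τ * b, c / τ)` for every `τ > 0`. Normalizing `(a, b)` to the sphere moves the factor
`r = ‖(a, b)‖` into the outer weight, and `2 |c| r ≤ r ^ 2 + c ^ 2` (AM-GM) shows that the `ℓ₁`
penalty of the result is at most the `ℓ₂` one. Conversely, rescaling a normalized neuron by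
`τ = √|c|` balances it, `‖(τ • a, τ * b)‖ = |c / τ|`, and then the `ℓ₂` penalty equals
`2 |c|`. So each problem has, for every configuration, a configuration of the other problem
with the same network and no larger objective.
-/

/-- This also holds for the junk value `0` of an unbounded or empty infimum, since the
hypotheses make `f` and `g` unbounded below, resp. empty, together. -/
lemma Real.iInf_eq_iInf_of_forall_exists_le {ι κ : Sort*} {f : ι → ℝ} {g : κ → ℝ}
    (hfg : ∀ i, ∃ k, g k ≤ f i) (hgf : ∀ k, ∃ i, f i ≤ g k) : ⨅ i, f i = ⨅ k, g k := by
  have bddBelow_iff : BddBelow (Set.range f) ↔ BddBelow (Set.range g) := by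
    constructor
    · rintro ⟨m, hm⟩
      refine ⟨m, Set.forall_mem_range.2 fun k => ?_⟩
      obtain ⟨i, hi⟩ := hgf k
      exact (hm (Set.mem_range_self i)).trans hi
    · rintro ⟨m, hm⟩
      refine ⟨m, Set.forall_mem_range.2 fun i => ?_⟩
      obtain ⟨k, hk⟩ := hfg i
      exact (hm (Set.mem_range_self k)).trans hk
  by_cases hf : BddBelow (Set.range f)
  · rcases isEmpty_or_nonempty ι with hι | hι
    · have : IsEmpty κ := ⟨fun k => hι.elim (hgf k).choose⟩
      simp
    · have : Nonempty κ := ⟨(hfg hι.some).choose⟩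
      exact le_antisymm (ciInf_mono_of_forall_exists hf hgf)
        (ciInf_mono_of_forall_exists (bddBelow_iff.1 hf) hfg)
  · rw [Real.iInf_of_not_bddBelow hf, Real.iInf_of_not_bddBelow (bddBelow_iff.not.1 hf)]

section ReLU

variable {d : ℕ}

def reluNeuron (p : EuclideanSpace ℝ (Fin d) × ℝ × ℝ) (x : EuclideanSpace ℝ (Fin d)) : ℝ :=
  p.2.2 * max (∑ i, p.1 i * x i + p.2.1) 0

lemma reluNeuron_smul_inner (a : EuclideanSpace ℝ (Fin d)) (b c : ℝ) {τ : ℝ} (hτ : 0 ≤ τ) :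
    reluNeuron (τ • a, τ * b, c) = reluNeuron (a, b, c * τ) := by
  funext x
  have : ∑ i, (τ • a) i * x i + τ * b = τ * (∑ i, a i * x i + b) := by
    simp only [PiLp.smul_apply, smul_eq_mul, mul_add, Finset.mul_sum, mul_assoc]
  rw [reluNeuron, reluNeuron, this, ← mul_zero τ, ← mul_max_of_nonneg _ _ hτ, mul_zero]
  ring

noncomputable def UnitSphereProd.normalize (a : EuclideanSpace ℝ (Fin d)) (b : ℝ) :
    UnitSphereProd d :=
  if h : ‖a‖ ^ 2 + b ^ 2 = 0 then ⟨(0, 1), by simp⟩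
  else
    ⟨((√(‖a‖ ^ 2 + b ^ 2))⁻¹ • a, (√(‖a‖ ^ 2 + b ^ 2))⁻¹ * b), by
      have hr : 0 ≤ ‖a‖ ^ 2 + b ^ 2 := by positivity
      simp only [norm_smul, norm_inv, Real.norm_eq_abs, mul_pow, inv_pow, sq_abs,
        Real.sq_sqrt hr, ← mul_add]
      exact inv_mul_cancel₀ h⟩

lemma UnitSphereProd.sqrt_smul_normalize (a : EuclideanSpace ℝ (Fin d)) (b : ℝ) :
    √(‖a‖ ^ 2 + b ^ 2) • (normalize a b).1.1 = a ∧
      √(‖a‖ ^ 2 + b ^ 2) * (normalize a b).1.2 = b := by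
  by_cases h : ‖a‖ ^ 2 + b ^ 2 = 0
  · have ha : ‖a‖ ^ 2 = 0 := by nlinarith [sq_nonneg ‖a‖, sq_nonneg b]
    simp_all
  · have hr : √(‖a‖ ^ 2 + b ^ 2) ≠ 0 := by positivity
    simp [normalize, h, smul_smul, hr]

lemma exists_reluNeuron_eq_of_norm_sq_add_sq_eq_one {a : EuclideanSpace ℝ (Fin d)} {b : ℝ}
    (hab : ‖a‖ ^ 2 + b ^ 2 = 1) (c : ℝ) :
    ∃ p : EuclideanSpace ℝ (Fin d) × ℝ × ℝ, reluNeuron p = reluNeuron (a, b, c) ∧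
      ‖p.1‖ ^ 2 + |p.2.1| ^ 2 + |p.2.2| ^ 2 = 2 * |c| := by
  set s := √|c|
  have hs : s ^ 2 = |c| := Real.sq_sqrt (abs_nonneg c)
  refine ⟨(s • a, s * b, c / s), ?_, ?_⟩
  · rw [reluNeuron_smul_inner a b _ (Real.sqrt_nonneg _), div_mul_cancel_of_imp]
    intro hs0
    simpa [hs0] using hs.symm
  · simp only [norm_smul, Real.norm_eq_abs, sq_abs, mul_pow, div_pow, hs]
    rw [← sq_abs c, pow_two |c|, mul_self_div_self]
    linear_combination |c| * hab

lemma exists_unitSphereProd_reluNeuron_eq (p : EuclideanSpace ℝ (Fin d) × ℝ × ℝ) :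
    ∃ q : UnitSphereProd d × ℝ, reluNeuron (q.1.1.1, q.1.1.2, q.2) = reluNeuron p ∧
      2 * |q.2| ≤ ‖p.1‖ ^ 2 + |p.2.1| ^ 2 + |p.2.2| ^ 2 := by
  obtain ⟨a, b, c⟩ := p
  have hr : 0 ≤ √(‖a‖ ^ 2 + b ^ 2) := Real.sqrt_nonneg _
  have hr_sq : √(‖a‖ ^ 2 + b ^ 2) ^ 2 = ‖a‖ ^ 2 + b ^ 2 := Real.sq_sqrt (by positivity)
  refine ⟨(UnitSphereProd.normalize a b, c * √(‖a‖ ^ 2 + b ^ 2)), ?_, ?_⟩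
  · obtain ⟨ha, hb⟩ := UnitSphereProd.sqrt_smul_normalize a b
    rw [← reluNeuron_smul_inner _ _ _ hr, ha, hb]
  · have := two_mul_le_add_sq |c| √(‖a‖ ^ 2 + b ^ 2)
    simp only [abs_mul, abs_of_nonneg hr, sq_abs] at this ⊢
    linarith

end ReLU

theorem l2_allWeights_eq_l1_outerWeights_general (d N : ℕ) (α : ℝ) (hα : 0 < α)
    (l : (EuclideanSpace ℝ (Fin d) → ℝ) → ℝ) :
    (⨅ w : Fin N → EuclideanSpace ℝ (Fin d) × ℝ × ℝ,
      l (fun x => ∑ n : Fin N, (w n).2.2 * max (∑ i : Fin d, (w n).1 i * x i + (w n).2.1) 0)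
        + α / 2 * ∑ n : Fin N, (‖(w n).1‖ ^ 2 + |(w n).2.1| ^ 2 + |(w n).2.2| ^ 2))
    = (⨅ w : Fin N → UnitSphereProd d × ℝ,
      l (fun x => ∑ n : Fin N,
          (w n).2 * max (∑ i : Fin d, (w n).1.1.1 i * x i + (w n).1.1.2) 0)
        + α * ∑ n : Fin N, |(w n).2|) := by
  refine Real.iInf_eq_iInf_of_forall_exists_le (fun w => ?_) (fun w => ?_)
  · choose q hq_eq hq_pen using fun n => exists_unitSphereProd_reluNeuron_eq (w n)
    have h_net : (fun x => ∑ n, reluNeuron (w n) x) =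
        fun x => ∑ n, reluNeuron ((q n).1.1.1, (q n).1.1.2, (q n).2) x := by
      simp only [hq_eq]
    refine ⟨q, add_le_add (congrArg l h_net.symm).le ?_⟩
    calc α * ∑ n, |(q n).2| = α / 2 * ∑ n, 2 * |(q n).2| := by rw [← Finset.mul_sum]; ring
      _ ≤ _ := by gcongr with n; exact hq_pen n
  · choose p hp_eq hp_pen using fun n =>
      exists_reluNeuron_eq_of_norm_sq_add_sq_eq_one (w n).1.2 (w n).2
    have h_net : (fun x => ∑ n, reluNeuron (p n) x) =
        fun x => ∑ n, reluNeuron ((w n).1.1.1, (w n).1.1.2, (w n).2) x := by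
      simp only [hp_eq]
    refine ⟨p, (congrArg₂ (· + ·) (congrArg l h_net) ?_).le⟩
    rw [Finset.sum_congr rfl fun n _ => hp_pen n, ← Finset.mul_sum]
    ring

/-- For any loss `l` depending only on the network function, the
all-weights `ℓ₂` penalization problem and the `ℓ₁` outer-weight penalization problem with
inner weights normalized to the unit sphere have the same optimal value:
`inf_{(a,b,c)} l(N_{ω,c}) + (α/2) Σ (‖(aₙ,bₙ)‖² + |cₙ|²)
  = inf_{(a,b)∈S^d, c} l(N_{ω,c}) + α Σ |cₙ|`. -/
theorem l2_allWeights_eq_l1_outerWeights (d N : ℕ) (hd : 1 ≤ d) (α : ℝ) (hα : 0 < α)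
    (l : (EuclideanSpace ℝ (Fin d) → ℝ) → ℝ) :
    (⨅ w : Fin N → EuclideanSpace ℝ (Fin d) × ℝ × ℝ,
      l (fun x => ∑ n : Fin N, (w n).2.2 * max (∑ i : Fin d, (w n).1 i * x i + (w n).2.1) 0)
        + α / 2 * ∑ n : Fin N, (‖(w n).1‖ ^ 2 + |(w n).2.1| ^ 2 + |(w n).2.2| ^ 2))
    = (⨅ w : Fin N → UnitSphereProd d × ℝ,
      l (fun x => ∑ n : Fin N,
          (w n).2 * max (∑ i : Fin d, (w n).1.1.1 i * x i + (w n).1.1.2) 0)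
        + α * ∑ n : Fin N, |(w n).2|) :=
  l2_allWeights_eq_l1_outerWeights_general d N α hα l
end

section
/- Fix γ > 0 and 0 < λ < 1/γ. For q ∈ ℝ, the function c ↦ (1/2)(c − q)² + (λ/γ) log(1 + γ|c|) has a unique global minimizer over ℝ, given by Prox(q) = 0 if |q| ≤ λ, and Prox(q) = (sign q)/(2γ) · [(γ|q| − 1) + √((γ|q| − 1)² + 4γ(|q| − λ))] if |q| > λ. -/
/-!
Split `½(c - q)² = ½(|c| - |q|)² + (|c| |q| - c q)`: the second term is nonnegative and vanishes
only when `c` has the sign of `q`, so everything reduces to the radial problem in `t = |c| ≥ 0`.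
Since `λγ < 1`, the radial objective `½(t - |q|)² + (λ/γ) log(1 + γ t)` has a strictly increasing
derivative `t - |q| + λ / (1 + γ t)` on `[0, ∞)`, so it is minimized exactly where the first-order
condition holds: at `t = 0` when `|q| ≤ λ`, and otherwise at the positive root of
`γ t² + (1 - γ|q|) t + (λ - |q|) = 0`.
-/

open Real Set

namespace Real

lemma sign_mul_self_eq_abs (q : ℝ) : sign q * q = |q| := by
  rcases lt_trichotomy q 0 with hq | rfl | hq
  · rw [sign_of_neg hq, abs_of_neg hq]; ring
  · simp
  · rw [sign_of_pos hq, abs_of_pos hq]; ring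

lemma abs_sign_of_ne_zero {q : ℝ} (hq : q ≠ 0) : |sign q| = 1 := by
  rcases sign_apply_eq_of_ne_zero q hq with h | h <;> simp [h]

end Real

/-- `hkkt` is the first-order optimality condition for minimizing over `[a, ∞)`. -/
lemma lt_of_strictMonoOn_deriv_of_kkt {f f' : ℝ → ℝ} {a t₀ : ℝ}
    (hf : ∀ x, a ≤ x → HasDerivAt f (f' x) x) (hf' : StrictMonoOn f' (Ici a))
    (ht₀ : a ≤ t₀) (hkkt : f' t₀ = 0 ∨ (t₀ = a ∧ 0 ≤ f' a))
    {t : ℝ} (ht : a ≤ t) (hne : t ≠ t₀) : f t₀ < f t := by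
  have hf'₀ : 0 ≤ f' t₀ := by rcases hkkt with h | ⟨rfl, h⟩ <;> simp [h]
  rcases hne.lt_or_gt with hlt | hgt
  · have hkkt : f' t₀ = 0 := hkkt.resolve_right fun ⟨h, _⟩ => by linarith
    obtain ⟨ξ, ⟨htξ, hξt₀⟩, hξ⟩ := exists_hasDerivAt_eq_slope f f' hlt
      (fun x hx => (hf x (ht.trans hx.1)).continuousAt.continuousWithinAt)
      (fun x hx => hf x (ht.trans hx.1.le))
    have : f' ξ < 0 := hkkt ▸ hf' (ht.trans htξ.le) ht₀ hξt₀
    rw [hξ, div_neg_iff] at this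
    rcases this with ⟨-, h⟩ | ⟨h, -⟩ <;> linarith
  · obtain ⟨ξ, ⟨ht₀ξ, hξt⟩, hξ⟩ := exists_hasDerivAt_eq_slope f f' hgt
      (fun x hx => (hf x (ht₀.trans hx.1)).continuousAt.continuousWithinAt)
      (fun x hx => hf x (ht₀.trans hx.1.le))
    have : 0 < f' ξ := hf'₀.trans_lt (hf' ht₀ (ht₀.trans ht₀ξ.le) ht₀ξ)
    rw [hξ, div_pos_iff] at this
    rcases this with ⟨h, -⟩ | ⟨-, h⟩ <;> linarith

lemma sign_mul_lt_of_radial_lt {φ : ℝ → ℝ} {q t₀ : ℝ} (ht₀ : 0 ≤ t₀) (hq : q = 0 → t₀ = 0)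
    (hmin : ∀ t, 0 ≤ t → t ≠ t₀ → 1 / 2 * (t₀ - |q|) ^ 2 + φ t₀ < 1 / 2 * (t - |q|) ^ 2 + φ t)
    {c : ℝ} (hc : c ≠ sign q * t₀) :
    1 / 2 * (sign q * t₀ - q) ^ 2 + φ |sign q * t₀| < 1 / 2 * (c - q) ^ 2 + φ |c| := by
  have hsplit : ∀ x : ℝ, 1 / 2 * (x - q) ^ 2 = 1 / 2 * (|x| - |q|) ^ 2 + (|x| * |q| - x * q) :=
    fun x => by linear_combination (1 / 2 : ℝ) * ((sq_abs x).symm + (sq_abs q).symm)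
  have hslack : 0 ≤ |c| * |q| - c * q := by
    rw [sub_nonneg, ← abs_mul]; exact le_abs_self _
  have hPq : sign q * t₀ * q = t₀ * |q| := by
    rw [mul_right_comm, sign_mul_self_eq_abs, mul_comm]
  have hPabs : |sign q * t₀| = t₀ := by
    rcases eq_or_ne q 0 with rfl | hq0
    · simp [hq rfl]
    · rw [abs_mul, abs_sign_of_ne_zero hq0, one_mul, abs_of_nonneg ht₀]
  rw [hsplit, hsplit c, hPabs, hPq]
  rcases ne_or_eq |c| t₀ with hct | hct
  · linarith [hmin |c| (abs_nonneg c) hct]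
  · have hq0 : q ≠ 0 := by
      rintro rfl
      exact hc (by simpa [hq rfl] using hct)
    have hslack' : 0 < |c| * |q| - c * q := by
      refine hslack.lt_of_ne fun h => hc (mul_right_cancel₀ hq0 ?_)
      rw [hPq, ← hct]; linarith
    rw [hct] at hslack' ⊢
    linarith

section LogRadial

variable {γ lam A : ℝ}

lemma hasDerivAt_logRadial (hγ : 0 < γ) {t : ℝ} (ht : 0 ≤ t) :
    HasDerivAt (fun s => 1 / 2 * (s - A) ^ 2 + lam / γ * log (1 + γ * s))
      (t - A + lam / (1 + γ * t)) t := by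
  have hpos : 0 < 1 + γ * t := by positivity
  have hlog : HasDerivAt (fun s => log (1 + γ * s)) (γ / (1 + γ * t)) t := by
    simpa using (((hasDerivAt_id t).const_mul γ).const_add 1).log hpos.ne'
  have hsq : HasDerivAt (fun s => 1 / 2 * (s - A) ^ 2) (t - A) t :=
    ((((hasDerivAt_id t).sub_const A).pow 2).const_mul (1 / 2 : ℝ)).congr_deriv (by simp)
  exact (hsq.add (hlog.const_mul (lam / γ))).congr_deriv (by field_simp)

lemma strictMonoOn_logRadial_deriv (hγ : 0 < γ) (hlamγ : lam * γ < 1) :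
    StrictMonoOn (fun t => t - A + lam / (1 + γ * t)) (Ici 0) := by
  intro s (hs : 0 ≤ s) u (hu : 0 ≤ u) hsu
  have hs1 : 1 ≤ 1 + γ * s := by nlinarith
  have hu1 : 1 ≤ 1 + γ * u := by nlinarith
  have hdiff : lam / (1 + γ * s) - lam / (1 + γ * u)
      = lam * γ * (u - s) / ((1 + γ * s) * (1 + γ * u)) := by
    field_simp
    ring
  have hlt : lam * γ * (u - s) / ((1 + γ * s) * (1 + γ * u)) < u - s := by
    rw [div_lt_iff₀ (by positivity)]
    nlinarith [mul_le_mul hs1 hu1 zero_le_one (by linarith), sub_pos.mpr hsu]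
  simp only
  linarith

lemma logRadial_lt_of_kkt (hγ : 0 < γ) (hlamγ : lam * γ < 1) {t₀ : ℝ} (ht₀ : 0 ≤ t₀)
    (hkkt : t₀ - A + lam / (1 + γ * t₀) = 0 ∨ (t₀ = 0 ∧ A ≤ lam))
    {t : ℝ} (ht : 0 ≤ t) (hne : t ≠ t₀) :
    1 / 2 * (t₀ - A) ^ 2 + lam / γ * log (1 + γ * t₀) <
      1 / 2 * (t - A) ^ 2 + lam / γ * log (1 + γ * t) :=
  lt_of_strictMonoOn_deriv_of_kkt (fun _ hx => hasDerivAt_logRadial hγ hx)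
    (strictMonoOn_logRadial_deriv hγ hlamγ) ht₀
    (hkkt.imp_right fun ⟨h0, hA⟩ => ⟨h0, by rw [mul_zero, add_zero, div_one]; linarith⟩) ht hne

/-- The positive root of `γ t² + (1 - γA) t + (λ - A) = 0`. -/
noncomputable def logProxRoot (γ lam A : ℝ) : ℝ :=
  ((γ * A - 1) + √((γ * A - 1) ^ 2 + 4 * γ * (A - lam))) / (2 * γ)

lemma logProxRoot_pos (hγ : 0 < γ) (hA : lam < A) : 0 < logProxRoot γ lam A := by
  have hlt : |γ * A - 1| < √((γ * A - 1) ^ 2 + 4 * γ * (A - lam)) := by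
    rw [← sqrt_sq_eq_abs]
    exact sqrt_lt_sqrt (sq_nonneg _) (by nlinarith)
  exact div_pos (by linarith [neg_abs_le (γ * A - 1)]) (by positivity)

lemma logProxRoot_deriv_eq_zero (hγ : 0 < γ) (hA : lam < A) :
    logProxRoot γ lam A - A + lam / (1 + γ * logProxRoot γ lam A) = 0 := by
  set t := logProxRoot γ lam A
  have hpos : 0 < 1 + γ * t := by nlinarith [logProxRoot_pos hγ hA]
  have hroot : 2 * γ * t - (γ * A - 1) = √((γ * A - 1) ^ 2 + 4 * γ * (A - lam)) := by
    simp only [t, logProxRoot]; field_simp; ring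
  have hsq := congrArg (· ^ 2) hroot
  rw [sq_sqrt (by nlinarith)] at hsq
  have hquad : γ * t ^ 2 + (1 - γ * A) * t + (lam - A) = 0 := by
    have : 4 * γ * (γ * t ^ 2 + (1 - γ * A) * t + (lam - A)) = 0 := by linear_combination hsq
    simpa [hγ.ne'] using this
  have hclear : (t - A + lam / (1 + γ * t)) * (1 + γ * t) = γ * t ^ 2 + (1 - γ * A) * t + (lam - A) := by
    rw [add_mul, div_mul_cancel₀ _ hpos.ne']; ring
  exact (mul_eq_zero.mp (hclear.trans hquad)).resolve_right hpos.ne'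

end LogRadial

/-- Fix `γ > 0` and `0 < λ < 1/γ`. For `q ∈ ℝ`, the nonconvex proximal
problem `c ↦ (1/2)(c - q)² + (λ/γ) log(1 + γ|c|)` has a unique global minimizer over `ℝ`,
given by `Prox(q) = 0` if `|q| ≤ λ` and
`Prox(q) = (sign q)/(2γ) ⬝ [(γ|q| - 1) + √((γ|q| - 1)² + 4γ(|q| - λ))]` if `|q| > λ`. -/
theorem prox_logPenalty (γ lam q : ℝ) (hγ : 0 < γ) (hlam : 0 < lam) (hlamγ : lam < 1 / γ)
    (F : ℝ → ℝ)
    (hF : ∀ c, F c = 1 / 2 * (c - q) ^ 2 + lam / γ * Real.log (1 + γ * |c|))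
    (P : ℝ)
    (hP₀ : |q| ≤ lam → P = 0)
    (hP₁ : lam < |q| → P = Real.sign q / (2 * γ) *
      ((γ * |q| - 1) + Real.sqrt ((γ * |q| - 1) ^ 2 + 4 * γ * (|q| - lam)))) :
    (∀ c : ℝ, F P ≤ F c) ∧ ∀ c : ℝ, F c = F P → c = P := by
  have hlamγ' : lam * γ < 1 := (lt_div_iff₀ hγ).mp hlamγ
  obtain ⟨t₀, ht₀, hq, rfl, hmin⟩ : ∃ t₀, 0 ≤ t₀ ∧ (q = 0 → t₀ = 0) ∧ P = sign q * t₀ ∧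
      ∀ t, 0 ≤ t → t ≠ t₀ → 1 / 2 * (t₀ - |q|) ^ 2 + lam / γ * log (1 + γ * t₀) <
        1 / 2 * (t - |q|) ^ 2 + lam / γ * log (1 + γ * t) := by
    rcases le_or_gt |q| lam with h | h
    · exact ⟨0, le_rfl, fun _ => rfl, by simp [hP₀ h],
        fun t => logRadial_lt_of_kkt hγ hlamγ' le_rfl (.inr ⟨rfl, h⟩)⟩
    · refine ⟨logProxRoot γ lam |q|, (logProxRoot_pos hγ h).le,
        fun hq0 => absurd h (by simp [hq0, hlam.le]), by rw [hP₁ h, logProxRoot]; ring,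
        fun t => logRadial_lt_of_kkt hγ hlamγ' (logProxRoot_pos hγ h).le
          (.inl (logProxRoot_deriv_eq_zero hγ h))⟩
  have hstrict : ∀ c, c ≠ sign q * t₀ → F (sign q * t₀) < F c := fun c hc => by
    simpa only [hF] using sign_mul_lt_of_radial_lt (φ := fun t => lam / γ * log (1 + γ * t)) ht₀ hq hmin hc
  refine ⟨fun c => ?_, fun c hc => by_contra fun hne => (hstrict c hne).ne' hc⟩
  rcases eq_or_ne c (sign q * t₀) with rfl | hc
  exacts [le_rfl, (hstrict c hc).le]
end
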